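/- For all real numbers a, b > 0 with a ≠ b and all θ > 0, one has θ·(ab)^{θ/2}·|a−b| / |a^θ − b^θ| ≤ (a−b)/(log a − log b) ≤ θ·(a^θ + b^θ)·(a−b) / (2(a^θ − b^θ)). -/

import Mathlib

/-!
Put `G = (a b)^(θ/2)` and `s = θ (log a - log b) / 2`. Then `a^θ - b^θ = 2 G sinh s` and
`a^θ + b^θ = 2 G cosh s`, so with `M` the logarithmic mean the left side equals `M |s| / |sinh s|`
and the right side equals `M s cosh s / sinh s`. The two bounds are therefore the elementary
inequalities `|s| ≤ |sinh s|` and `s sinh s ≤ s² cosh s`, i.e. `|tanh s| ≤ |s| ≤ |sinh s|`.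
-/

namespace Real

lemma abs_le_abs_sinh (x : ℝ) : |x| ≤ |sinh x| := by
  rw [abs_sinh]
  exact self_le_sinh_iff.2 (abs_nonneg x)

lemma mul_sinh_pos {x : ℝ} (hx : x ≠ 0) : 0 < x * sinh x := by
  rcases hx.lt_or_gt with hx | hx
  · exact mul_pos_of_neg_of_neg hx (sinh_neg_iff.2 hx)
  · exact mul_pos hx (sinh_pos_iff.2 hx)

lemma sinh_le_mul_cosh {x : ℝ} (hx : 0 ≤ x) : sinh x ≤ x * cosh x := by
  have hmono : MonotoneOn (fun t ↦ t * cosh t - sinh t) (Set.Ici 0) := by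
    refine monotoneOn_of_hasDerivWithinAt_nonneg (f' := fun t ↦ t * sinh t) (convex_Ici 0)
      (by fun_prop) (fun t _ ↦ ?_) (fun t ht ↦ ?_)
    · have hderiv : HasDerivAt (fun t ↦ t * cosh t - sinh t) (1 * cosh t + t * sinh t - cosh t) t :=
        ((hasDerivAt_id' t).fun_mul (hasDerivAt_cosh t)).fun_sub (hasDerivAt_sinh t)
      exact (hderiv.congr_deriv (by ring)).hasDerivWithinAt
    · exact (mul_sinh_pos (by rw [interior_Ici] at ht; exact ht.ne')).le
  simpa using hmono Set.self_mem_Ici (Set.mem_Ici.2 hx) hx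

lemma mul_sinh_le_sq_mul_cosh (x : ℝ) : x * sinh x ≤ x ^ 2 * cosh x := by
  rcases le_total 0 x with hx | hx
  · nlinarith [sinh_le_mul_cosh hx]
  · nlinarith [sinh_le_mul_cosh (neg_nonneg.2 hx), sinh_neg x, cosh_neg x]

lemma one_le_mul_cosh_div_sinh {x : ℝ} (hx : x ≠ 0) : 1 ≤ x * cosh x / sinh x := by
  rw [← mul_div_mul_left _ (sinh x) hx, ← mul_assoc, ← sq, one_le_div (mul_sinh_pos hx)]
  exact mul_sinh_le_sq_mul_cosh x

lemma exp_sub_exp (x y : ℝ) : exp x - exp y = 2 * exp ((x + y) / 2) * sinh ((x - y) / 2) := by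
  calc exp x - exp y = exp ((x + y) / 2 + (x - y) / 2) - exp ((x + y) / 2 + -((x - y) / 2)) := by
        ring_nf
    _ = _ := by rw [sinh_eq, exp_add, exp_add]; ring

lemma exp_add_exp (x y : ℝ) : exp x + exp y = 2 * exp ((x + y) / 2) * cosh ((x - y) / 2) := by
  calc exp x + exp y = exp ((x + y) / 2 + (x - y) / 2) + exp ((x + y) / 2 + -((x - y) / 2)) := by
        ring_nf
    _ = _ := by rw [cosh_eq, exp_add, exp_add]; ring

lemma rpow_sub_rpow_eq_mul_sinh {a b : ℝ} (ha : 0 < a) (hb : 0 < b) (θ : ℝ) :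
    a ^ θ - b ^ θ = 2 * (a * b) ^ (θ / 2) * sinh (θ * (log a - log b) / 2) := by
  rw [rpow_def_of_pos ha, rpow_def_of_pos hb, rpow_def_of_pos (mul_pos ha hb),
    log_mul ha.ne' hb.ne', exp_sub_exp]
  ring_nf

lemma rpow_add_rpow_eq_mul_cosh {a b : ℝ} (ha : 0 < a) (hb : 0 < b) (θ : ℝ) :
    a ^ θ + b ^ θ = 2 * (a * b) ^ (θ / 2) * cosh (θ * (log a - log b) / 2) := by
  rw [rpow_def_of_pos ha, rpow_def_of_pos hb, rpow_def_of_pos (mul_pos ha hb),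
    log_mul ha.ne' hb.ne', exp_add_exp]
  ring_nf

lemma sub_div_log_sub_log_pos {a b : ℝ} (ha : 0 < a) (hb : 0 < b) (hab : a ≠ b) :
    0 < (a - b) / (log a - log b) := by
  rcases hab.lt_or_gt with h | h
  · exact div_pos_of_neg_of_neg (by linarith) (by linarith [log_lt_log ha h])
  · exact div_pos (by linarith) (by linarith [log_lt_log hb h])

end Real

open Real

theorem log_mean_two_sided_bound (a b θ : ℝ) (ha : 0 < a) (hb : 0 < b) (hab : a ≠ b)
    (hθ : 0 < θ) :
    θ * (a * b) ^ (θ / 2) * |a - b| / |a ^ θ - b ^ θ| ≤ (a - b) / (Real.log a - Real.log b) ∧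
    (a - b) / (Real.log a - Real.log b) ≤ θ * (a ^ θ + b ^ θ) * (a - b) / (2 * (a ^ θ - b ^ θ)) := by
  have hL : log a - log b ≠ 0 := sub_ne_zero.2 fun h ↦ hab (log_injOn_pos ha hb h)
  set s := θ * (log a - log b) / 2 with hs
  have hs0 : s ≠ 0 := div_ne_zero (mul_ne_zero hθ.ne' hL) two_ne_zero
  have hM := sub_div_log_sub_log_pos ha hb hab
  have hG : 0 < (a * b) ^ (θ / 2) := by positivity
  have hsinh : sinh s ≠ 0 := sinh_ne_zero.2 hs0
  rw [rpow_sub_rpow_eq_mul_sinh ha hb, rpow_add_rpow_eq_mul_cosh ha hb]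
  constructor
  · calc θ * (a * b) ^ (θ / 2) * |a - b| / |2 * (a * b) ^ (θ / 2) * sinh s|
        = (a - b) / (log a - log b) * (|s| / |sinh s|) := by
          rw [← abs_of_pos hM, abs_div, hs, abs_div, abs_mul, abs_mul, abs_mul, abs_of_pos hθ,
            abs_of_pos hG, abs_two]
          field_simp
      _ ≤ (a - b) / (log a - log b) :=
          mul_le_of_le_one_right hM.le (div_le_one_of_le₀ (abs_le_abs_sinh s) (abs_nonneg _))
  · calc (a - b) / (log a - log b)
        ≤ (a - b) / (log a - log b) * (s * cosh s / sinh s) :=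
          le_mul_of_one_le_right hM.le (one_le_mul_cosh_div_sinh hs0)
      _ = θ * (2 * (a * b) ^ (θ / 2) * cosh s) * (a - b) /
            (2 * (2 * (a * b) ^ (θ / 2) * sinh s)) := by
          rw [hs]
          field_simp
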